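/- arXiv:2104.02552 — 2 statements merged into one kernel-verified Lean document; each statement's English description precedes it below -/
import Mathlib

section
/- Let M be a globally hyperbolic spacetime with closed causal relation J^+, and let K ⊂ M be compact. With respect to a complete Riemannian metric h on M, J^+(K) = ∩_{n=1}^∞ I^+(N̄_{1/n}(K)), where N̄_ε(K) = {p ∈ M : d_h(p,K) ≤ ε}. -/
open Set Metric Filter Topology

/-!
The inclusion `⊆` is push-up applied to points approximating `p ∈ K` from its chronological
past. Conversely, if `q` lies in every `I⁺(N̄_{1/n}(K))`, pick `pₙ ≪ q` at distance `≤ 1/n`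
from some `kₙ ∈ K`; a subsequence of `kₙ` converges to some `a ∈ K`, hence so does `pₙ`, and
since `pₙ ⪯ q` and the fibre `J⁻(q)` of the closed relation is closed, `a ⪯ q`.
-/

theorem IsCompact.inter_nonempty_of_tendsto_dist {X : Type*} [PseudoMetricSpace X]
    {K C : Set X} (hK : IsCompact K) (hC : IsClosed C) {p k : ℕ → X}
    (hp : ∀ n, p n ∈ C) (hk : ∀ n, k n ∈ K)
    (hpk : Tendsto (fun n => dist (p n) (k n)) atTop (𝓝 0)) : (K ∩ C).Nonempty := by
  obtain ⟨a, haK, φ, hφ, hka⟩ := hK.tendsto_subseq hk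
  have hpa : Tendsto (p ∘ φ) atTop (𝓝 a) :=
    hka.congr_dist (by simpa only [dist_comm, Function.comp_def] using hpk.comp hφ.tendsto_atTop)
  exact ⟨a, haK, hC.mem_of_tendsto hpa (Eventually.of_forall fun n => hp (φ n))⟩

/-- `chron` and `causal` stand for the chronological relation `≪` and the causal relation `⪯`
of the spacetime, and `dist` for the distance `d_h`. -/
theorem statement9_general {M : Type*} [MetricSpace M]
    (chron causal : M → M → Prop)
    (hclosed : IsClosed {x : M × M | causal x.1 x.2})
    (hsub : ∀ p q : M, chron p q → causal p q)
    (happrox : ∀ p : M, ∀ ε : ℝ, 0 < ε → ∃ r : M, chron r p ∧ dist r p < ε)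
    (hpush : ∀ r p q : M, chron r p → causal p q → chron r q)
    (K : Set M) (hK : IsCompact K) :
    {q : M | ∃ p ∈ K, causal p q} =
      ⋂ n : ℕ, {q : M | ∃ p : M, (∃ k ∈ K, dist p k ≤ 1 / (n + 1)) ∧ chron p q} := by
  ext q
  constructor
  · rintro ⟨p, hpK, hpq⟩
    refine mem_iInter.2 fun n => ?_
    obtain ⟨r, hrp, hdist⟩ := happrox p _ Nat.one_div_pos_of_nat
    exact ⟨r, ⟨p, hpK, hdist.le⟩, hpush r p q hrp hpq⟩
  · intro hq
    choose p hp hpq using mem_iInter.1 hq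
    choose k hk hpk using hp
    have hpast : IsClosed {p | causal p q} :=
      hclosed.preimage (continuous_id.prodMk continuous_const)
    obtain ⟨a, haK, haq⟩ := hK.inter_nonempty_of_tendsto_dist hpast
      (fun n => hsub _ _ (hpq n)) hk
      (squeeze_zero (fun _ => dist_nonneg) hpk tendsto_one_div_add_atTop_nhds_zero_nat)
    exact ⟨a, haK, haq⟩

/-- Let `M` be a globally hyperbolic spacetime — axiomatized here via its
chronological relation `chron` (`≪`) and a closed causal relation `causal` (`⪯`), together
with the standard facts: `≪ ⊆ ⪯`, push-up (`r ≪ p ⪯ q ⟹ r ≪ q`) and approximation of any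
point from the chronological past in the distance `d_h` of a complete Riemannian metric
(for which closed `ε`-neighborhoods of compact sets are compact). Then for every compact
`K ⊆ M`: `J⁺(K) = ⋂ₙ I⁺(N̄_{1/n}(K))`. -/
theorem statement9 {M : Type*} [MetricSpace M]
    (chron causal : M → M → Prop)
    (hclosed : IsClosed {x : M × M | causal x.1 x.2})
    (hsub : ∀ p q : M, chron p q → causal p q)
    (happrox : ∀ p : M, ∀ ε : ℝ, 0 < ε → ∃ r : M, chron r p ∧ dist r p < ε)
    (hpush : ∀ r p q : M, chron r p → causal p q → chron r q)
    (K : Set M) (hK : IsCompact K)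
    (hball : ∀ ε : ℝ, 0 < ε → IsCompact {p : M | ∃ k ∈ K, dist p k ≤ ε}) :
    {q : M | ∃ p ∈ K, causal p q} =
      ⋂ n : ℕ, {q : M | ∃ p : M, (∃ k ∈ K, dist p k ≤ 1 / (n + 1)) ∧ chron p q} :=
  statement9_general chron causal hclosed hsub happrox hpush K hK
end

section
/- Let M be a globally hyperbolic spacetime with Cauchy temporal function 𝒯, and I ⊂ ℝ an interval. The set A_𝒯^I of continuous future-directed causal curves γ: I → M with 𝒯∘γ = id_I is a closed subset of C(I,M) with the compact-open topology; in particular A_𝒯^I is a Polish space. -/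
open Set Topology

/-! Both defining conditions of `A_𝒯^I` are intersections, over points or pairs of points of `I`,
of preimages of closed sets under evaluation maps, which are continuous for the compact-open
topology. Polishness then follows since an interval is locally compact, so `C(I, M)` is Polish and
so is each of its closed subsets. -/

theorem Set.OrdConnected.isLocallyClosed {α : Type*} [ConditionallyCompleteLinearOrder α]
    [TopologicalSpace α] [OrderTopology α] [DenselyOrdered α] {s : Set α} (hs : s.OrdConnected) :
    IsLocallyClosed s := by
  rcases hs.isPreconnected.mem_intervals with h | h | h | h | h | h | h | h | h | h <;> rw [h]
  exacts [isLocallyClosed_Icc, isLocallyClosed_Ico, isLocallyClosed_Ioc, isLocallyClosed_Ioo,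
    isLocallyClosed_Ici, isLocallyClosed_Ioi, isLocallyClosed_Iic, isLocallyClosed_Iio,
    isClosed_univ.isLocallyClosed, isClosed_empty.isLocallyClosed]

namespace ContinuousMap

variable {X Y : Type*} [TopologicalSpace X] [TopologicalSpace Y]

theorem isClosed_ofPred_forall_apply_mem {S : X → Set Y} (hS : ∀ x, IsClosed (S x)) :
    IsClosed {γ : C(X, Y) | ∀ x, γ x ∈ S x} := by
  simp only [ofPred_forall]
  exact isClosed_iInter fun x => (hS x).preimage (continuous_eval_const x)

theorem isClosed_ofPred_forall_rel {R : Y → Y → Prop} (hR : IsClosed {p : Y × Y | R p.1 p.2})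
    (r : X → X → Prop) : IsClosed {γ : C(X, Y) | ∀ s t, r s t → R (γ s) (γ t)} := by
  simp only [ofPred_forall]
  exact isClosed_iInter fun s => isClosed_iInter fun t => isClosed_iInter fun _ =>
    hR.preimage ((continuous_eval_const s).prodMk (continuous_eval_const t))

theorem polishSpace [LocallyCompactSpace X] [SecondCountableTopology X] [PolishSpace Y] :
    PolishSpace C(X, Y) := by
  let := TopologicalSpace.upgradeIsCompletelyMetrizable Y
  infer_instance

end ContinuousMap

/-- Let `M` be a (globally hyperbolic) spacetime — axiomatized by a
Polish topology, a closed causal relation `causal` (`J⁺` closed, as holds in globally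
hyperbolic spacetimes) and a continuous Cauchy temporal function `𝒯`. For an interval
`I ⊆ ℝ`, the set `A_𝒯^I` of continuous future-directed causal curves `γ : I → M` with
`𝒯 ∘ γ = id_I` is a closed subset of `C(I,M)` (carrying the compact-open topology); in
particular it is a Polish space. -/
theorem statement14 {M : Type*} [TopologicalSpace M] [PolishSpace M]
    (causal : M → M → Prop)
    (hclosed : IsClosed {x : M × M | causal x.1 x.2})
    (𝒯 : M → ℝ) (h𝒯 : Continuous 𝒯)
    (I : Set ℝ) (hI : I.OrdConnected) :
    IsClosed {γ : C(I, M) | (∀ t : I, 𝒯 (γ t) = (t : ℝ)) ∧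
        ∀ s t : I, (s : ℝ) ≤ (t : ℝ) → causal (γ s) (γ t)} ∧
    PolishSpace {γ : C(I, M) | (∀ t : I, 𝒯 (γ t) = (t : ℝ)) ∧
        ∀ s t : I, (s : ℝ) ≤ (t : ℝ) → causal (γ s) (γ t)} := by
  have hA : IsClosed {γ : C(I, M) | (∀ t : I, 𝒯 (γ t) = (t : ℝ)) ∧
      ∀ s t : I, (s : ℝ) ≤ (t : ℝ) → causal (γ s) (γ t)} :=
    (ContinuousMap.isClosed_ofPred_forall_apply_mem fun t => isClosed_singleton.preimage h𝒯).inter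
      (ContinuousMap.isClosed_ofPred_forall_rel hclosed _)
  have := hI.isLocallyClosed.locallyCompactSpace
  have := ContinuousMap.polishSpace (X := I) (Y := M)
  exact ⟨hA, hA.polishSpace⟩
end
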